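/- Let f : ℝ^n → ℝ and c : ℝ^n → ℝ^p be continuously differentiable, and for x ∈ ℝ^n let E(x) be the n × p matrix whose j-th column is the gradient ∇c_j(x). Fix x* ∈ ℝ^n and α > 0, and assume E(x*) has full column rank (equivalently, the gradients ∇c_1(x*),…,∇c_p(x*) are linearly independent). Let (x_k)_{k≥1} be a sequence in ℝ^n with x_k → x* such that for each k, ∇f(x_k) + k E(x_k) c(x_k) + α(x_k − x*) = 0. Then k·c(x_k) converges as k → ∞ to the vector τ* = −(E(x*)ᵀE(x*))^{−1} E(x*)ᵀ ∇f(x*), and this limit satisfies ∇f(x*) + E(x*) τ* = 0. Moreover, if every component c_j is nonnegative on ℝ^n, then every component of τ* is nonnegative. -/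

import Mathlib

open Filter Matrix
open scoped Matrix


lemma myContGrad {F : Type*} [NormedAddCommGroup F] [InnerProductSpace ℝ F] [CompleteSpace F]
    {f : F → ℝ} (hf : ContDiff ℝ 1 f) : Continuous (fun x => gradient f x) := by
  have h1 : Continuous (fun x => fderiv ℝ f x) := hf.continuous_fderiv one_ne_zero
  exact (InnerProductSpace.toDual ℝ F).symm.continuous.comp h1

lemma myInvCont {m : ℕ} (A₀ : Matrix (Fin m) (Fin m) ℝ) (h : A₀.det ≠ 0) :
    ContinuousAt (fun A : Matrix (Fin m) (Fin m) ℝ => A⁻¹) A₀ := by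
  have he : ∀ A : Matrix (Fin m) (Fin m) ℝ, A⁻¹ = (A.det)⁻¹ • A.adjugate := by
    intro A; rw [Matrix.inv_def, Ring.inverse_eq_inv']
  simp only [he]
  exact ((continuous_id.matrix_det.continuousAt.inv₀ h)).smul
    continuous_id.matrix_adjugate.continuousAt

lemma pilp_sum_apply {m : ℕ} {ι : Type*} (s : Finset ι) (h : ι → EuclideanSpace ℝ (Fin m))
    (i : Fin m) : (∑ j ∈ s, h j) i = ∑ j ∈ s, h j i := by
  induction s using Finset.cons_induction with
  | empty => rfl
  | cons a s ha ih => simp [Finset.sum_cons, PiLp.add_apply, ih]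

lemma gram_det_ne {n p : ℕ} (G : Matrix (Fin n) (Fin p) ℝ)
    (g : Fin p → EuclideanSpace ℝ (Fin n))
    (hG : G = Matrix.of fun i j => g j i)
    (hrank : LinearIndependent ℝ g) : (Gᵀ * G).det ≠ 0 := by
  intro h0
  obtain ⟨v, hv0, hv⟩ := (Matrix.exists_mulVec_eq_zero_iff).mpr h0
  have hdot : (G *ᵥ v) ⬝ᵥ (G *ᵥ v) = 0 := by
    have : v ⬝ᵥ ((Gᵀ * G) *ᵥ v) = 0 := by rw [hv, dotProduct_zero]
    rwa [← Matrix.mulVec_mulVec, Matrix.dotProduct_mulVec, Matrix.vecMul_transpose] at this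
  have hGv : ∀ i, (G *ᵥ v) i = 0 := by
    intro i
    have h1 : ∀ i ∈ Finset.univ, 0 ≤ (G *ᵥ v) i * (G *ᵥ v) i := fun i _ => mul_self_nonneg _
    have := (Finset.sum_eq_zero_iff_of_nonneg h1).mp hdot i (Finset.mem_univ i)
    exact mul_self_eq_zero.mp this
  have hsum : ∑ j, v j • g j = 0 := by
    ext i
    have := hGv i
    simp only [Matrix.mulVec, dotProduct, hG, Matrix.of_apply] at this
    simp only [pilp_sum_apply, PiLp.smul_apply, smul_eq_mul, PiLp.zero_apply]
    simpa [mul_comm] using this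
  exact hv0 (funext fun j => Fintype.linearIndependent_iff.mp hrank v hsum j)

set_option maxHeartbeats 1000000 in
/-- Multiplier identification in the penalty proof: let `E(x)` be the `n × p` matrix whose
`j`-th column is `∇c_j(x)`, assume `E(x*)` has full column rank (the gradients
`∇c_j(x*)` are linearly independent), and let `x_k → x*` satisfy the stationarity
condition `∇f(x_k) + k E(x_k) c(x_k) + α(x_k − x*) = 0` for each `k`. Then
`k · c(x_k)` converges to `τ* = −(E(x*)ᵀE(x*))⁻¹ E(x*)ᵀ ∇f(x*)`, which satisfies
`∇f(x*) + E(x*) τ* = 0`; and if every `c_j` is nonnegative then every `τ*_j ≥ 0`. -/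
theorem penalty_multiplier_identification
    {n p : ℕ}
    (f : EuclideanSpace ℝ (Fin n) → ℝ)
    (c : EuclideanSpace ℝ (Fin n) → EuclideanSpace ℝ (Fin p))
    (hf : ContDiff ℝ 1 f)
    (hc : ∀ j : Fin p, ContDiff ℝ 1 (fun x => c x j))
    (E : EuclideanSpace ℝ (Fin n) → Matrix (Fin n) (Fin p) ℝ)
    (hE : ∀ x, E x = Matrix.of fun i j => gradient (fun y => c y j) x i)
    (xstar : EuclideanSpace ℝ (Fin n)) (α : ℝ) (hα : 0 < α)
    (hrank : LinearIndependent ℝ (fun j : Fin p => gradient (fun y => c y j) xstar))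
    (xk : ℕ → EuclideanSpace ℝ (Fin n))
    (hlim : Tendsto xk atTop (nhds xstar))
    (hstat : ∀ k : ℕ, 1 ≤ k →
      gradient f (xk k)
        + (k : ℝ) • ∑ j : Fin p, c (xk k) j • gradient (fun y => c y j) (xk k)
        + α • (xk k - xstar) = 0)
    (τstar : EuclideanSpace ℝ (Fin p))
    (hτ : ∀ j : Fin p, τstar j
      = -((((E xstar)ᵀ * E xstar)⁻¹ * (E xstar)ᵀ).mulVec
          (fun i => gradient f xstar i)) j) :
    Tendsto (fun k : ℕ => (k : ℝ) • c (xk k)) atTop (nhds τstar) ∧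
      gradient f xstar + ∑ j : Fin p, τstar j • gradient (fun y => c y j) xstar = 0 ∧
      ((∀ x, ∀ j : Fin p, 0 ≤ c x j) → ∀ j : Fin p, 0 ≤ τstar j) := by
  classical
  set g : EuclideanSpace ℝ (Fin n) → Fin p → EuclideanSpace ℝ (Fin n) :=
    fun x j => gradient (fun y => c y j) x with hgdef
  set G : EuclideanSpace ℝ (Fin n) → Matrix (Fin n) (Fin p) ℝ :=
    fun x => Matrix.of fun i j => g x j i with hGdef
  have hgcont : ∀ j, Continuous fun x => g x j := fun j => myContGrad (hc j)
  have hGcont : Continuous G := by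
    apply continuous_pi; intro i; apply continuous_pi; intro j
    exact (PiLp.continuous_apply 2 _ i).comp (hgcont j)
  set w : ℕ → Fin p → ℝ := fun k j => (k : ℝ) * c (xk k) j with hwdef
  set bfun : ℕ → Fin n → ℝ :=
    fun k i => -(gradient f (xk k) i) - α * ((xk k) i - xstar i) with hbdef
  set bstar : Fin n → ℝ := fun i => -(gradient f xstar i) with hbsdef
  -- stationarity in matrix form
  have hGw : ∀ k : ℕ, 1 ≤ k → (G (xk k)) *ᵥ (w k) = bfun k := by
    intro k hk
    funext i
    have h := congrArg (fun v => v i) (hstat k hk)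
    simp only [PiLp.add_apply, PiLp.smul_apply, PiLp.sub_apply, PiLp.zero_apply,
      pilp_sum_apply, smul_eq_mul] at h
    simp only [Matrix.mulVec, dotProduct, hGdef, Matrix.of_apply, hwdef, hbdef,
      Finset.mul_sum] at h ⊢
    have : ∑ j, g (xk k) j i * ((k:ℝ) * c (xk k) j) = ∑ j, (k:ℝ) * (c (xk k) j * g (xk k) j i) := by
      apply Finset.sum_congr rfl; intro j _; ring
    rw [this]; linarith [h]
  -- Gram determinant nonzero at xstar
  have hdet : ((G xstar)ᵀ * G xstar).det ≠ 0 :=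
    gram_det_ne (G xstar) (g xstar) rfl hrank
  -- continuity of pseudoinverse map
  set Φ : Matrix (Fin n) (Fin p) ℝ × (Fin n → ℝ) → (Fin p → ℝ) :=
    fun q => ((q.1ᵀ * q.1)⁻¹ * q.1ᵀ) *ᵥ q.2 with hΦdef
  have c1 : Continuous (fun q : Matrix (Fin n) (Fin p) ℝ × (Fin n → ℝ) => q.1ᵀ * q.1) :=
    (continuous_fst.matrix_transpose).matrix_mul continuous_fst
  have c2 : ContinuousAt (fun q : Matrix (Fin n) (Fin p) ℝ × (Fin n → ℝ) => (q.1ᵀ * q.1)⁻¹)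
      (G xstar, bstar) :=
    ContinuousAt.comp (g := fun A : Matrix (Fin p) (Fin p) ℝ => A⁻¹)
      (myInvCont _ hdet) c1.continuousAt
  have c3 : ContinuousAt
      (fun q : Matrix (Fin n) (Fin p) ℝ × (Fin n → ℝ) => (q.1ᵀ * q.1)⁻¹ * q.1ᵀ)
      (G xstar, bstar) := by
    have houter : Continuous (fun r : Matrix (Fin p) (Fin p) ℝ × Matrix (Fin n) (Fin p) ℝ =>
        r.1 * r.2ᵀ) := continuous_fst.matrix_mul (continuous_snd.matrix_transpose)
    exact ContinuousAt.comp
      (g := fun r : Matrix (Fin p) (Fin p) ℝ × Matrix (Fin n) (Fin p) ℝ => r.1 * r.2ᵀ)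
      houter.continuousAt (c2.prodMk continuous_fst.continuousAt)
  have cΦ : ContinuousAt Φ (G xstar, bstar) := by
    have houter : Continuous (fun r : Matrix (Fin p) (Fin n) ℝ × (Fin n → ℝ) =>
        r.1 *ᵥ r.2) := continuous_fst.matrix_mulVec continuous_snd
    exact ContinuousAt.comp
      (g := fun r : Matrix (Fin p) (Fin n) ℝ × (Fin n → ℝ) => r.1 *ᵥ r.2)
      houter.continuousAt (c3.prodMk continuous_snd.continuousAt)
  -- tendsto of the pair
  have hbt : Tendsto bfun atTop (nhds bstar) := by
    rw [tendsto_pi_nhds]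
    intro i
    have h1 : Tendsto (fun k => gradient f (xk k) i) atTop (nhds (gradient f xstar i)) :=
      (((PiLp.continuous_apply 2 _ i).comp (myContGrad hf)).tendsto xstar).comp hlim
    have h2 : Tendsto (fun k => (xk k) i) atTop (nhds (xstar i)) :=
      ((PiLp.continuous_apply 2 _ i).tendsto xstar).comp hlim
    have h3 : Tendsto (fun k => (xk k) i - xstar i) atTop (nhds (xstar i - xstar i)) :=
      h2.sub (tendsto_const_nhds (x := xstar i))
    have h4 := (h1.neg).sub (h3.const_mul α)
    simpa using h4
  have hGt : Tendsto (fun k => G (xk k)) atTop (nhds (G xstar)) :=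
    (hGcont.tendsto xstar).comp hlim
  have hpair : Tendsto (fun k => (G (xk k), bfun k)) atTop (nhds (G xstar, bstar)) :=
    hGt.prodMk_nhds hbt
  -- eventually the Gram matrix along the sequence is invertible and w has closed form
  have hdetk : ∀ᶠ k in atTop, ((G (xk k))ᵀ * G (xk k)).det ≠ 0 := by
    have hcont : Continuous fun x => ((G x)ᵀ * G x).det :=
      ((hGcont.matrix_transpose).matrix_mul hGcont).matrix_det
    exact ((hcont.tendsto xstar).comp hlim).eventually_ne hdet
  have hwformula : ∀ᶠ k in atTop, Φ (G (xk k), bfun k) = w k := by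
    filter_upwards [hdetk, eventually_ge_atTop 1] with k hd hk
    have hu : IsUnit ((G (xk k))ᵀ * G (xk k)).det := isUnit_iff_ne_zero.mpr hd
    calc Φ (G (xk k), bfun k)
        = (((G (xk k))ᵀ * G (xk k))⁻¹ * (G (xk k))ᵀ) *ᵥ (G (xk k) *ᵥ w k) := by
          rw [hGw k hk]
      _ = ((((G (xk k))ᵀ * G (xk k))⁻¹ * (G (xk k))ᵀ) * G (xk k)) *ᵥ w k := by
          rw [Matrix.mulVec_mulVec]
      _ = (((G (xk k))ᵀ * G (xk k))⁻¹ * ((G (xk k))ᵀ * G (xk k))) *ᵥ w k := by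
          rw [Matrix.mul_assoc]
      _ = w k := by rw [Matrix.nonsing_inv_mul _ hu, Matrix.one_mulVec]
  have hwt : Tendsto w atTop (nhds (Φ (G xstar, bstar))) :=
    (cΦ.tendsto.comp hpair).congr' hwformula
  -- identify the limit
  have hτ' : ∀ j, τstar j
      = -(((((G xstar)ᵀ * G xstar)⁻¹ * (G xstar)ᵀ) *ᵥ (fun i => gradient f xstar i)) j) := by
    intro j; rw [hτ j, hE xstar]
  have hτval : Φ (G xstar, bstar) = fun j => τstar j := by
    funext j
    rw [hτ' j]
    show ((((G xstar)ᵀ * G xstar)⁻¹ * (G xstar)ᵀ) *ᵥ bstar) j = _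
    have e2 : bstar = -(fun i => gradient f xstar i) := rfl
    rw [e2, Matrix.mulVec_neg, Pi.neg_apply]
  rw [hτval] at hwt
  -- conclusion 1
  have hconc1 : Tendsto (fun k : ℕ => (k : ℝ) • c (xk k)) atTop (nhds τstar) := by
    have hsymm : Continuous ((WithLp.equiv 2 (Fin p → ℝ)).symm) := by
      exact PiLp.continuous_toLp 2 (fun _ : Fin p => ℝ)
    have ht : Tendsto (fun k => (WithLp.equiv 2 (Fin p → ℝ)).symm (w k)) atTop
        (nhds ((WithLp.equiv 2 (Fin p → ℝ)).symm (fun j => τstar j))) :=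
      (hsymm.tendsto _).comp hwt
    have h1 : ((WithLp.equiv 2 (Fin p → ℝ)).symm (fun j => τstar j)) = τstar := rfl
    have h2 : ∀ k, (WithLp.equiv 2 (Fin p → ℝ)).symm (w k) = (k : ℝ) • c (xk k) := by
      intro k; ext j; simp [hwdef, PiLp.smul_apply, WithLp.equiv_symm_apply]
    rw [h1] at ht
    exact ht.congr h2
  refine ⟨hconc1, ?_, ?_⟩
  · -- conclusion 2
    have hwjt : ∀ j, Tendsto (fun k => w k j) atTop (nhds (τstar j)) := fun j =>
      ((continuous_apply j).tendsto _).comp hwt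
    have hmid : Tendsto (fun k => ∑ j, w k j • g (xk k) j) atTop
        (nhds (∑ j, τstar j • g xstar j)) := by
      apply tendsto_finset_sum
      intro j _
      exact (hwjt j).smul (((hgcont j).tendsto xstar).comp hlim)
    have hgradt : Tendsto (fun k => gradient f (xk k)) atTop (nhds (gradient f xstar)) :=
      ((myContGrad hf).tendsto xstar).comp hlim
    have hcorr : Tendsto (fun k => α • (xk k - xstar)) atTop (nhds 0) := by
      have := (hlim.sub (tendsto_const_nhds (x := xstar))).const_smul α
      simpa using this
    have hS : Tendsto (fun k => gradient f (xk k) + ∑ j, w k j • g (xk k) j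
        + α • (xk k - xstar)) atTop
        (nhds (gradient f xstar + ∑ j, τstar j • g xstar j + 0)) :=
      (hgradt.add hmid).add hcorr
    have hS0 : Tendsto (fun k => gradient f (xk k) + ∑ j, w k j • g (xk k) j
        + α • (xk k - xstar)) atTop (nhds 0) := by
      apply Tendsto.congr' _ (tendsto_const_nhds (x := (0 : EuclideanSpace ℝ (Fin n))))
      filter_upwards [eventually_ge_atTop 1] with k hk
      have h := hstat k hk
      rw [← h]
      congr 1
      congr 1
      rw [Finset.smul_sum]
      apply Finset.sum_congr rfl
      intro j _
      rw [smul_smul]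
    have := tendsto_nhds_unique hS hS0
    rw [add_zero] at this
    exact this
  · -- conclusion 3
    intro hcnn j
    have hwjt : Tendsto (fun k => w k j) atTop (nhds (τstar j)) :=
      ((continuous_apply j).tendsto _).comp hwt
    refine ge_of_tendsto' hwjt ?_
    intro k
    exact mul_nonneg (Nat.cast_nonneg k) (hcnn (xk k) j)
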